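/- arXiv:math/0309340 — 2 statements merged into one kernel-verified Lean document; each statement's English description precedes it below -/
import Mathlib

section
/- (Proposition 1.) Let ζ ∈ ℂ with 0 ≤ |ζ| < 1, set s = |ζ|², u = ζ/(1-s), v = conj(ζ)/(1-s). Let a, b, c, d ∈ ℂ (representing z_u, z_v, z̄_u, z̄_v), and define the chain-rule combinations z_ζ = (b·conj(ζ)² + a)/(1-s)², z̄_ζ = (d·conj(ζ)² + c)/(1-s)², z_ζ̄ = (a·ζ² + b)/(1-s)², z̄_ζ̄ = (c·ζ² + d)/(1-s)². Then the pair of equations (d - a = 0 and v²·b + (1+2uv)·d + u²·c = 0) holds if and only if both ζ²·z̄_ζ + z_ζ = 0 and conj(ζ)²·z_ζ̄ + z̄_ζ̄ = 0 hold. -/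
open Complex

/-!
Writing `t = 1 - ζζ̄` and `s = ζζ̄`, each of the three expressions `v²z_v + (1+2uv)z̄_v + u²z̄_u`,
`ζ²z̄_ζ + z_ζ`, `ζ̄²z_ζ̄ + z̄_ζ̄` is a numerator over `t²`, and with `E = ζ̄²z_v + ζ²z̄_u` the
numerators are `E + (1+s²)z̄_v`, `E + s²z̄_v + z_u` and `E + s²z_u + z̄_v`, because
`t² + 2s = 1 + s²`. The last two differ by `(s² - 1)(z̄_v - z_u)`, and `s² ≠ 1` as `0 ≤ s < 1`.
This is pure algebra, done over any field with `w` standing for `ζ̄`.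
-/

section Hodograph

variable {K : Type*} [Field K] {ζ w a b c d : K}

lemma linearized_hodograph_eq_div (ht : 1 - ζ * w ≠ 0) :
    (w / (1 - ζ * w)) ^ 2 * b + (1 + 2 * (ζ / (1 - ζ * w)) * (w / (1 - ζ * w))) * d
        + (ζ / (1 - ζ * w)) ^ 2 * c
      = (w ^ 2 * b + ζ ^ 2 * c + (1 + (ζ * w) ^ 2) * d) / (1 - ζ * w) ^ 2 := by
  have ht' : 1 - w * ζ ≠ 0 := by rwa [mul_comm]
  field_simp
  ring

lemma hodograph_zeta_eq_div :
    ζ ^ 2 * ((d * w ^ 2 + c) / (1 - ζ * w) ^ 2) + (b * w ^ 2 + a) / (1 - ζ * w) ^ 2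
      = (w ^ 2 * b + ζ ^ 2 * c + (ζ * w) ^ 2 * d + a) / (1 - ζ * w) ^ 2 := by
  ring

lemma hodograph_zetaBar_eq_div :
    w ^ 2 * ((a * ζ ^ 2 + b) / (1 - ζ * w) ^ 2) + (c * ζ ^ 2 + d) / (1 - ζ * w) ^ 2
      = (w ^ 2 * b + ζ ^ 2 * c + (ζ * w) ^ 2 * a + d) / (1 - ζ * w) ^ 2 := by
  ring

lemma sub_eq_zero_and_iff_of_sq_ne_one {s e : K} (hs : s ^ 2 ≠ 1) :
    (d - a = 0 ∧ e + (1 + s ^ 2) * d = 0) ↔ (e + s ^ 2 * d + a = 0 ∧ e + s ^ 2 * a + d = 0) := by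
  constructor
  · rintro ⟨hda, he⟩
    exact ⟨by linear_combination he - hda, by linear_combination he - s ^ 2 * hda⟩
  · rintro ⟨h₁, h₂⟩
    have hda : d - a = 0 := by
      have : (s ^ 2 - 1) * (d - a) = 0 := by linear_combination h₁ - h₂
      exact (mul_eq_zero.mp this).resolve_left (sub_ne_zero.mpr hs)
    exact ⟨hda, by linear_combination h₁ + hda⟩

theorem linearized_hodograph_iff (ht : 1 - ζ * w ≠ 0) (hs : (ζ * w) ^ 2 ≠ 1) :
    (d - a = 0 ∧ (w / (1 - ζ * w)) ^ 2 * b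
        + (1 + 2 * (ζ / (1 - ζ * w)) * (w / (1 - ζ * w))) * d + (ζ / (1 - ζ * w)) ^ 2 * c = 0) ↔
      (ζ ^ 2 * ((d * w ^ 2 + c) / (1 - ζ * w) ^ 2) + (b * w ^ 2 + a) / (1 - ζ * w) ^ 2 = 0 ∧
        w ^ 2 * ((a * ζ ^ 2 + b) / (1 - ζ * w) ^ 2) + (c * ζ ^ 2 + d) / (1 - ζ * w) ^ 2 = 0) := by
  have ht2 : (1 - ζ * w) ^ 2 ≠ 0 := pow_ne_zero 2 ht
  rw [linearized_hodograph_eq_div ht, hodograph_zeta_eq_div, hodograph_zetaBar_eq_div,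
    div_eq_zero_iff, div_eq_zero_iff, div_eq_zero_iff]
  simp only [ht2, or_false]
  exact sub_eq_zero_and_iff_of_sq_ne_one hs

end Hodograph

/-- Proposition 1: in the hodographic variables `ζ`, `ζ̄` with
`u = ζ/(1-|ζ|²)`, `v = ζ̄/(1-|ζ|²)`, and with the chain-rule expressions
`z_ζ = (z_v ζ̄² + z_u)/(1-|ζ|²)²` etc., the linearized hodograph system
`z̄_v - z_u = 0`, `v²z_v + (1+2uv)z̄_v + u²z̄_u = 0` is equivalent to
`ζ²z̄_ζ + z_ζ = 0` together with its conjugate equation `ζ̄²z_ζ̄ + z̄_ζ̄ = 0`.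
Here `a = z_u, b = z_v, c = z̄_u, d = z̄_v`. -/
theorem stmt_3 (ζ : ℂ) (hζ : ‖ζ‖ < 1) (s : ℝ) (hs : s = ‖ζ‖ ^ 2)
    (u v : ℂ) (hu : u = ζ / (1 - (s : ℂ))) (hv : v = starRingEnd ℂ ζ / (1 - (s : ℂ)))
    (a b c d zζ zbζ zζb zbζb : ℂ)
    (hzζ : zζ = (b * (starRingEnd ℂ ζ) ^ 2 + a) / (1 - (s : ℂ)) ^ 2)
    (hzbζ : zbζ = (d * (starRingEnd ℂ ζ) ^ 2 + c) / (1 - (s : ℂ)) ^ 2)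
    (hzζb : zζb = (a * ζ ^ 2 + b) / (1 - (s : ℂ)) ^ 2)
    (hzbζb : zbζb = (c * ζ ^ 2 + d) / (1 - (s : ℂ)) ^ 2) :
    (d - a = 0 ∧ v ^ 2 * b + (1 + 2 * u * v) * d + u ^ 2 * c = 0) ↔
      (ζ ^ 2 * zbζ + zζ = 0 ∧ (starRingEnd ℂ ζ) ^ 2 * zζb + zbζb = 0) := by
  have hs_nonneg : 0 ≤ s := hs ▸ by positivity
  have hs_lt_one : s < 1 := hs ▸ by nlinarith [norm_nonneg ζ]
  have hζs : ζ * starRingEnd ℂ ζ = s := by rw [mul_conj, hs, normSq_eq_norm_sq]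
  have ht : 1 - ζ * starRingEnd ℂ ζ ≠ 0 := by
    rw [hζs]; exact_mod_cast (sub_pos.mpr hs_lt_one).ne'
  have hsq : (ζ * starRingEnd ℂ ζ) ^ 2 ≠ 1 := by
    rw [hζs]; exact_mod_cast (pow_lt_one₀ hs_nonneg hs_lt_one two_ne_zero).ne
  subst hu hv hzζ hzbζ hzζb hzbζb
  rw [← hζs]
  exact linearized_hodograph_iff ht hsq
end

section
/- Let D ⊆ ℂ be open, F : ℂ → ℂ holomorphic (differentiable) on D, and let P₁, P₂, P₃ : ℂ → ℂ be holomorphic on D with derivatives P₁′(ζ) = (1 - ζ²)·F′(ζ), P₂′(ζ) = i·(1 + ζ²)·F′(ζ), P₃′(ζ) = 2·ζ·F′(ζ) for all ζ ∈ D. Define X : D → ℝ³ by X(ζ) = (Re P₁(ζ), Re P₂(ζ), Re P₃(ζ)). Then at every point ζ ∈ D the partial derivatives of X with respect to the real coordinates ζ₁ = Re ζ and ζ₂ = Im ζ satisfy ‖∂X/∂ζ₁‖² = ‖∂X/∂ζ₂‖² and ⟨∂X/∂ζ₁, ∂X/∂ζ₂⟩ = 0. That is, the Weierstrass–Enneper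 representation X(ζ) = (x₀, y₀, φ₀) + Re ∫ ((1-ω²)F′(ω), i(1+ω²)F′(ω), 2ωF′(ω)) dω is conformal: ζ₁, ζ₂ are isothermal coordinates. -/
/-!
By the Cauchy–Riemann equations the derivative of `Re P` in the real direction `h` is
`Re (h P′)`, so `X_{ζ₁} = Re φ` and `X_{ζ₂} = Re (i φ) = -Im φ` for the Weierstrass vector
`φ = F′ (1 - ζ², i (1 + ζ²), 2ζ)`. This vector is isotropic, `∑ φₖ² = 0`, and the real and
imaginary parts of that identity are `‖Re φ‖² = ‖Im φ‖²` and `⟨Re φ, Im φ⟩ = 0`.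
-/

open scoped RealInnerProductSpace
open Complex

theorem fderiv_toLp_re_apply {ι : Type*} [Fintype ι] {P : ι → ℂ → ℂ} {w : ι → ℂ} {ζ : ℂ}
    (hP : ∀ i, HasDerivAt (P i) (w i) ζ) (h : ℂ) :
    fderiv ℝ (fun z => WithLp.toLp 2 fun i => (P i z).re) ζ h =
      WithLp.toLp 2 fun i => (h * w i).re := by
  have hre := hasFDerivAt_pi.2 fun i =>
    reCLM.hasFDerivAt.comp ζ ((hP i).hasFDerivAt.restrictScalars ℝ)
  have hX : HasFDerivAt (fun z => WithLp.toLp 2 fun i => (P i z).re) _ ζ :=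
    (PiLp.hasFDerivAt_toLp 2 _).comp ζ hre
  rw [hX.fderiv]
  rfl

theorem norm_re_sq_eq_and_inner_eq_zero_of_sum_sq_eq_zero {ι : Type*} [Fintype ι] {w : ι → ℂ}
    (hw : ∑ i, w i ^ 2 = 0) :
    ‖(WithLp.toLp 2 fun i => (w i).re : EuclideanSpace ℝ ι)‖ ^ 2 =
        ‖(WithLp.toLp 2 fun i => (I * w i).re : EuclideanSpace ℝ ι)‖ ^ 2 ∧
      ⟪(WithLp.toLp 2 fun i => (w i).re : EuclideanSpace ℝ ι),
        WithLp.toLp 2 fun i => (I * w i).re⟫ = 0 := by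
  have hre : ∑ i, ((w i).re ^ 2 - (w i).im ^ 2) = 0 := by
    simpa [sq, re_sum] using congrArg re hw
  have him : ∑ i, (w i).re * (w i).im = 0 := by
    have h := congrArg im hw
    simp only [im_sum, sq, mul_im, zero_im, mul_comm (w _).im, ← two_mul, ← Finset.mul_sum] at h
    simpa using h
  simp only [EuclideanSpace.norm_sq_eq, Real.norm_eq_abs, sq_abs, mul_re, I_re, zero_mul, I_im,
    one_mul, zero_sub, neg_sq, PiLp.inner_apply, RCLike.inner_apply, Real.ringHom_apply, neg_mul,
    Finset.sum_neg_distrib, neg_eq_zero]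
  constructor
  · rwa [Finset.sum_sub_distrib, sub_eq_zero] at hre
  · simpa only [mul_comm] using him

theorem weierstrassEnneper_sum_sq (ζ f : ℂ) :
    ∑ i, ![(1 - ζ ^ 2) * f, I * (1 + ζ ^ 2) * f, 2 * ζ * f] i ^ 2 = 0 := by
  simp only [Fin.sum_univ_three, Matrix.cons_val_zero, Matrix.cons_val_one, Matrix.cons_val_two,
    Matrix.head_cons, Matrix.tail_cons]
  linear_combination (1 + ζ ^ 2) ^ 2 * f ^ 2 * I_sq

theorem stmt_8_general (D : Set ℂ) (F P₁ P₂ P₃ : ℂ → ℂ)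
    (hP₁ : ∀ ζ ∈ D, HasDerivAt P₁ ((1 - ζ ^ 2) * deriv F ζ) ζ)
    (hP₂ : ∀ ζ ∈ D, HasDerivAt P₂ (Complex.I * (1 + ζ ^ 2) * deriv F ζ) ζ)
    (hP₃ : ∀ ζ ∈ D, HasDerivAt P₃ (2 * ζ * deriv F ζ) ζ)
    (X : ℂ → EuclideanSpace ℝ (Fin 3))
    (hX : X = fun ζ => (EuclideanSpace.equiv (Fin 3) ℝ).symm
      ![(P₁ ζ).re, (P₂ ζ).re, (P₃ ζ).re]) :
    ∀ ζ ∈ D,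
      ‖fderiv ℝ X ζ 1‖ ^ 2 = ‖fderiv ℝ X ζ Complex.I‖ ^ 2 ∧
        ⟪fderiv ℝ X ζ 1, fderiv ℝ X ζ Complex.I⟫ = 0 := by
  intro ζ hζ
  have hX' : X = fun z => WithLp.toLp 2 fun i => (![P₁, P₂, P₃] i z).re := by
    subst hX
    funext z
    ext i
    fin_cases i <;> rfl
  have hP : ∀ i, HasDerivAt (![P₁, P₂, P₃] i)
      (![(1 - ζ ^ 2) * deriv F ζ, I * (1 + ζ ^ 2) * deriv F ζ, 2 * ζ * deriv F ζ] i) ζ := by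
    intro i
    fin_cases i
    exacts [hP₁ ζ hζ, hP₂ ζ hζ, hP₃ ζ hζ]
  rw [hX', fderiv_toLp_re_apply hP, fderiv_toLp_re_apply hP]
  simpa only [one_mul] using
    norm_re_sq_eq_and_inner_eq_zero_of_sum_sq_eq_zero (weierstrassEnneper_sum_sq ζ (deriv F ζ))

/-- Conformality of the Weierstrass–Enneper representation: if `F` is holomorphic
on an open `D ⊆ ℂ` and `P₁, P₂, P₃` are (holomorphic) primitives on `D` of
`(1-ζ²)F′`, `i(1+ζ²)F′`, `2ζF′` respectively, then
`X = (Re P₁, Re P₂, Re P₃) : D → ℝ³` satisfies `‖X_{ζ₁}‖² = ‖X_{ζ₂}‖²` and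
`⟨X_{ζ₁}, X_{ζ₂}⟩ = 0` at every point of `D`: the real coordinates
`ζ₁ = Re ζ`, `ζ₂ = Im ζ` are isothermal. -/
theorem stmt_8 (D : Set ℂ) (hD : IsOpen D) (F P₁ P₂ P₃ : ℂ → ℂ)
    (hF : DifferentiableOn ℂ F D)
    (hP₁ : ∀ ζ ∈ D, HasDerivAt P₁ ((1 - ζ ^ 2) * deriv F ζ) ζ)
    (hP₂ : ∀ ζ ∈ D, HasDerivAt P₂ (Complex.I * (1 + ζ ^ 2) * deriv F ζ) ζ)
    (hP₃ : ∀ ζ ∈ D, HasDerivAt P₃ (2 * ζ * deriv F ζ) ζ)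
    (X : ℂ → EuclideanSpace ℝ (Fin 3))
    (hX : X = fun ζ => (EuclideanSpace.equiv (Fin 3) ℝ).symm
      ![(P₁ ζ).re, (P₂ ζ).re, (P₃ ζ).re]) :
    ∀ ζ ∈ D,
      ‖fderiv ℝ X ζ 1‖ ^ 2 = ‖fderiv ℝ X ζ Complex.I‖ ^ 2 ∧
        ⟪fderiv ℝ X ζ 1, fderiv ℝ X ζ Complex.I⟫ = 0 :=
  stmt_8_general D F P₁ P₂ P₃ hP₁ hP₂ hP₃ X hX
end
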